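/- arXiv:2109.13379 — 4 statements merged into one kernel-verified Lean document; each statement's English description precedes it below -/
import Mathlib

section
/- Let A₁₁, B₂₁ be n×n Hermitian matrices and A₂₁ an invertible n×n complex matrix. Define K₁₁ = (i/2)[(B₂₁ + iI)(A₂₁*)^{-1}(A₁₁ + iI) + A₂₁], K₁₂ = (i/2)[(B₂₁ + iI)(A₂₁*)^{-1}(A₁₁ - iI) + A₂₁], and K₂₄ = (-i/2)[(A₁₁ - iI)A₂₁^{-1}(B₂₁ - iI) + A₂₁*]. Then K₂₄ = K₁₁* and K₁₂ K₁₂* - K₁₁ K₂₄ = I. -/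
open Matrix

/-!
Everything happens in a complex star-algebra: `K₁₁ a b y u` etc. take `a = A₁₁`, `b = B₂₁`,
`u = A₂₁` and `y = A₂₁⁻¹`, and only `u * y = 1` is used (then `star y * star u = 1`).
Conjugation exchanges `A₁₁ + i` and `A₁₁ - i`, which gives `K₂₄ = K₁₁*`. In
`K₁₂ K₁₂* - K₁₁ K₂₄` the terms of degree two cancel because `A₁₁ - i` and `A₁₁ + i` commute,
and the cross terms leave `(1/4)(-2i (B₂₁ + i) + 2i (B₂₁ - i)) = 1`.
-/

theorem Commute.add_mul_add_sub_add_mul_add {R : Type*} [Ring R] {m p : R} (h : Commute m p)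
    (x c d u y z : R) :
    (x * c * m + u) * (p * y * z + d) - (x * c * p + u) * (m * y * z + d) =
      x * c * (m - p) * d + u * (p - m) * y * z := by
  have hmp : x * c * m * (p * y * z) = x * c * p * (m * y * z) := by
    simp only [mul_assoc, h.left_comm]
  simp only [add_mul, mul_add, mul_sub, sub_mul, hmp]
  noncomm_ring

namespace CoupledForm

open Complex

variable {R : Type*} [Ring R] [StarRing R] [Algebra ℂ R] [StarModule ℂ R]

noncomputable def K₁₁ (a b y u : R) : R := (I / 2) • ((b + I • 1) * star y * (a + I • 1) + u)
noncomputable def K₁₂ (a b y u : R) : R := (I / 2) • ((b + I • 1) * star y * (a - I • 1) + u)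
noncomputable def K₂₄ (a b y u : R) : R := (-I / 2) • ((a - I • 1) * y * (b - I • 1) + star u)

variable {a b : R}

theorem star_add_I_smul_one (ha : IsSelfAdjoint a) : star (a + I • 1) = a - I • 1 := by
  simp [ha.star_eq, sub_eq_add_neg]

theorem star_sub_I_smul_one (ha : IsSelfAdjoint a) : star (a - I • 1) = a + I • 1 := by
  simp [ha.star_eq, sub_eq_add_neg]

theorem star_K₁₁ (ha : IsSelfAdjoint a) (hb : IsSelfAdjoint b) (y u : R) :
    star (K₁₁ a b y u) = K₂₄ a b y u := by
  simp [K₁₁, K₂₄, star_add_I_smul_one ha, star_add_I_smul_one hb, mul_assoc]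

theorem star_K₁₂ (ha : IsSelfAdjoint a) (hb : IsSelfAdjoint b) (y u : R) :
    star (K₁₂ a b y u) = (-I / 2) • ((a + I • 1) * y * (b - I • 1) + star u) := by
  simp [K₁₂, star_add_I_smul_one hb, star_sub_I_smul_one ha, mul_assoc]

theorem K₁₂_mul_star_sub_K₁₁_mul_K₂₄ (ha : IsSelfAdjoint a) (hb : IsSelfAdjoint b) {y u : R}
    (huy : u * y = 1) : K₁₂ a b y u * star (K₁₂ a b y u) - K₁₁ a b y u * K₂₄ a b y u = 1 := by
  have hyu : star y * star u = 1 := by rw [← star_mul, huy, star_one]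
  have hcomm : Commute (a - I • 1) (a + I • 1) := by
    have hI : Commute a (I • 1 : R) := (Commute.one_right a).smul_right I
    exact ((Commute.refl a).add_right hI).sub_left (hI.symm.add_right (Commute.refl _))
  have hdiff : (a - I • 1) - (a + I • 1) = (-2 * I) • (1 : R) := by module
  have hquarter : I / 2 * (-I / 2) = (1 / 4 : ℂ) := by
    linear_combination (-1 / 4 : ℂ) * I_sq
  have huy' : ∀ z, u * (y * z) = z := fun z => by rw [← mul_assoc, huy, one_mul]
  calc K₁₂ a b y u * star (K₁₂ a b y u) - K₁₁ a b y u * K₂₄ a b y u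
      = (1 / 4 : ℂ) • (((b + I • 1) * star y * (a - I • 1) + u) *
          ((a + I • 1) * y * (b - I • 1) + star u) - ((b + I • 1) * star y * (a + I • 1) + u) *
          ((a - I • 1) * y * (b - I • 1) + star u)) := by
        rw [star_K₁₂ ha hb, K₁₂, K₁₁, K₂₄, smul_mul_smul_comm, smul_mul_smul_comm, ← smul_sub,
          hquarter]
    _ = (1 / 4 : ℂ) • ((-2 * I) • (b + I • 1) + (2 * I) • (b - I • 1)) := by
        rw [hcomm.add_mul_add_sub_add_mul_add, hdiff, ← neg_sub, hdiff]
        simp only [mul_smul_comm, smul_mul_assoc, mul_one, mul_neg, mul_assoc, hyu, huy',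
          neg_smul, neg_neg, neg_mul]
    _ = 1 := by
        match_scalars
        · ring
        · linear_combination -I_sq

end CoupledForm

theorem K_identities (n : ℕ)
    (A₁₁ B₂₁ A₂₁ K₁₁ K₁₂ K₂₄ : Matrix (Fin n) (Fin n) ℂ)
    (hA₁₁ : A₁₁.IsHermitian) (hB₂₁ : B₂₁.IsHermitian) (hA₂₁ : IsUnit A₂₁)
    (hK₁₁ : K₁₁ = (Complex.I / 2) •
      ((B₂₁ + Complex.I • 1) * (A₂₁ᴴ)⁻¹ * (A₁₁ + Complex.I • 1) + A₂₁))
    (hK₁₂ : K₁₂ = (Complex.I / 2) •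
      ((B₂₁ + Complex.I • 1) * (A₂₁ᴴ)⁻¹ * (A₁₁ - Complex.I • 1) + A₂₁))
    (hK₂₄ : K₂₄ = (-(Complex.I) / 2) •
      ((A₁₁ - Complex.I • 1) * A₂₁⁻¹ * (B₂₁ - Complex.I • 1) + A₂₁ᴴ)) :
    K₂₄ = K₁₁ᴴ ∧ K₁₂ * K₁₂ᴴ - K₁₁ * K₂₄ = 1 := by
  have hinv : A₂₁ * A₂₁⁻¹ = 1 := mul_nonsing_inv _ ((isUnit_iff_isUnit_det _).mp hA₂₁)
  rw [← conjTranspose_nonsing_inv] at hK₁₁ hK₁₂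
  obtain rfl : K₁₁ = CoupledForm.K₁₁ A₁₁ B₂₁ A₂₁⁻¹ A₂₁ := hK₁₁
  obtain rfl : K₁₂ = CoupledForm.K₁₂ A₁₁ B₂₁ A₂₁⁻¹ A₂₁ := hK₁₂
  obtain rfl : K₂₄ = CoupledForm.K₂₄ A₁₁ B₂₁ A₂₁⁻¹ A₂₁ := hK₂₄
  exact ⟨(CoupledForm.star_K₁₁ hA₁₁ hB₂₁ _ _).symm,
    CoupledForm.K₁₂_mul_star_sub_K₁₁_mul_K₂₄ hA₁₁ hB₂₁ hinv⟩
end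

section
/- Let A₁₁, B₂₁ be n×n Hermitian matrices and A₂₁ an invertible n×n complex matrix. Then the 2n×2n block matrix [[I, A₂₁*(B₂₁ + iI)^{-1}], [-A₂₁(A₁₁ - iI)^{-1}, I]] is invertible. -/
/-! Right multiplication by `diag(A₁₁ - iI, -(B₂₁ + iI))` turns the block matrix into
`[[A₁₁, -A₂₁ᴴ], [-A₂₁, -B₂₁]] - iI`, a Hermitian matrix minus `iI`. Hermitian matrices have
real spectrum, so this product, and with it the block matrix, is invertible. -/

open Matrix

theorem Matrix.IsHermitian.isUnit_sub_smul_one {𝕜 n : Type*} [RCLike 𝕜] [Fintype n]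
    [DecidableEq n] {H : Matrix n n 𝕜} (hH : H.IsHermitian) {c : 𝕜} (hc : RCLike.im c ≠ 0) :
    IsUnit (H - c • 1) := by
  have hc : c ∉ spectrum 𝕜 H := by
    rw [hH.spectrum_eq_image_range]
    rintro ⟨r, -, rfl⟩
    exact hc (RCLike.ofReal_im r)
  simpa [Algebra.algebraMap_eq_smul_one, neg_sub] using (spectrum.notMem_iff.mp hc).neg

theorem block_matrix_invertible_general (n : ℕ)
    (A₁₁ B₂₁ A₂₁ : Matrix (Fin n) (Fin n) ℂ)
    (hA₁₁ : A₁₁.IsHermitian) (hB₂₁ : B₂₁.IsHermitian) :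
    IsUnit (Matrix.fromBlocks 1 (A₂₁ᴴ * (B₂₁ + Complex.I • 1)⁻¹)
      (-(A₂₁ * (A₁₁ - Complex.I • 1)⁻¹)) 1) := by
  set P := A₁₁ - Complex.I • 1
  set Q := B₂₁ + Complex.I • 1
  have hP : IsUnit P.det := (isUnit_iff_isUnit_det _).mp <|
    hA₁₁.isUnit_sub_smul_one (c := Complex.I) (by simp)
  have hQ : IsUnit Q.det := by
    have := hB₂₁.neg.isUnit_sub_smul_one (c := Complex.I) (by simp)
    rwa [← neg_add', IsUnit.neg_iff, isUnit_iff_isUnit_det] at this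
  have key : fromBlocks 1 (A₂₁ᴴ * Q⁻¹) (-(A₂₁ * P⁻¹)) 1 * fromBlocks P 0 0 (-Q) =
      fromBlocks A₁₁ (-A₂₁ᴴ) (-A₂₁) (-B₂₁) - Complex.I • 1 := calc
    _ = fromBlocks P (-A₂₁ᴴ) (-A₂₁) (-Q) := by
      rw [fromBlocks_multiply]
      simp [Matrix.mul_assoc, nonsing_inv_mul _ hP, nonsing_inv_mul _ hQ]
    _ = _ := by
      rw [← fromBlocks_one, fromBlocks_smul, sub_eq_add_neg, fromBlocks_neg, fromBlocks_add]
      simp [P, Q, sub_eq_add_neg, add_comm]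
  have hG : (fromBlocks A₁₁ (-A₂₁ᴴ) (-A₂₁) (-B₂₁)).IsHermitian :=
    hA₁₁.fromBlocks (by simp) hB₂₁.neg
  exact isUnit_of_mul_isUnit_left (key ▸ hG.isUnit_sub_smul_one (by simp))

theorem block_matrix_invertible (n : ℕ)
    (A₁₁ B₂₁ A₂₁ : Matrix (Fin n) (Fin n) ℂ)
    (hA₁₁ : A₁₁.IsHermitian) (hB₂₁ : B₂₁.IsHermitian) (hA₂₁ : IsUnit A₂₁) :
    IsUnit (Matrix.fromBlocks 1 (A₂₁ᴴ * (B₂₁ + Complex.I • 1)⁻¹)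
      (-(A₂₁ * (A₁₁ - Complex.I • 1)⁻¹)) 1) :=
  block_matrix_invertible_general n A₁₁ B₂₁ A₂₁ hA₁₁ hB₂₁
end

section
/- Suppose K₁₁ is an n×n complex matrix and K₁₂ satisfies K₁₂ K₁₂* = I + K₁₁ K₁₁*. Then K₁₂ K₁₂* is positive definite and in the singular value decomposition K₁₁ = V₂* S^{-1} C V₁ (with S, C positive semi-definite diagonal, S² + C² = I), necessarily rank S = n, i.e. S is invertible with S ≤ I. -/
open Matrix
open scoped ComplexOrder

namespace Matrix

variable {n : Type*} [Fintype n] [DecidableEq n]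

/-- If `S x = 0`, then `xᴴ C V = xᴴ S W = 0`, so `C x = 0` as well, and `x = (S² + C²) x = 0`. -/
theorem isUnit_of_mul_eq_mul_of_sq_add_sq_eq_one {K : Type*} [Field K] [StarRing K]
    {S C V W : Matrix n n K} (hS : S.IsHermitian) (hC : C.IsHermitian)
    (hSC : S ^ 2 + C ^ 2 = 1) (hV : IsUnit V) (hSW : S * W = C * V) : IsUnit S := by
  refine mulVec_injective_iff_isUnit.mp <| (injective_iff_map_eq_zero S.mulVecLin).mpr ?_
  intro x (hSx : S *ᵥ x = 0)
  have hxS : star x ᵥ* S = 0 := by rw [← hS.eq, ← star_mulVec, hSx, star_zero]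
  have hxC : star x ᵥ* C = 0 := by
    apply vecMul_injective_of_isUnit hV
    change star x ᵥ* C ᵥ* V = 0 ᵥ* V
    rw [vecMul_vecMul, ← hSW, ← vecMul_vecMul, hxS, zero_vecMul, zero_vecMul]
  have hCx : C *ᵥ x = 0 := by
    rw [← star_eq_zero, star_mulVec, hC.eq, hxC]
  calc x = (S ^ 2 + C ^ 2) *ᵥ x := by rw [hSC, one_mulVec]
    _ = 0 := by
      rw [add_mulVec, sq, sq, ← mulVec_mulVec, ← mulVec_mulVec, hSx, hCx]
      simp

theorem PosSemidef.one_sub_of_isDiag_of_sq_add_sq_eq_one {𝕜 : Type*} [RCLike 𝕜]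
    {S C : Matrix n n 𝕜} (hS : S.PosSemidef) (hSd : S.IsDiag) (hC : C.IsHermitian)
    (hSC : S ^ 2 + C ^ 2 = 1) : (1 - S).PosSemidef := by
  obtain ⟨d, rfl⟩ : ∃ d, S = diagonal d := ⟨S.diag, hSd.diagonal_diag.symm⟩
  rw [← diagonal_one, diagonal_sub, posSemidef_diagonal_iff]
  intro i
  obtain ⟨r, hr, hrd⟩ := RCLike.nonneg_iff_exists_ofReal.mp (posSemidef_diagonal_iff.mp hS i)
  have hCC : 0 ≤ (C ^ 2) i i := by
    rw [sq]
    nth_rewrite 2 [← hC.eq]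
    exact (posSemidef_self_mul_conjTranspose C).diag_nonneg
  have hdi : (r : 𝕜) ^ 2 + (C ^ 2) i i = 1 := by
    rw [hrd]
    simpa [sq, diagonal_mul_diagonal] using congrFun (congrFun hSC i) i
  have hr2 : (r : 𝕜) ^ 2 ≤ 1 := hdi ▸ le_add_of_nonneg_right hCC
  have hr1 : r ≤ 1 := by
    have : r ^ 2 ≤ 1 := by exact_mod_cast hr2
    exact (pow_le_one_iff_of_nonneg hr two_ne_zero).mp this
  rw [sub_nonneg, ← hrd]
  exact_mod_cast hr1

end Matrix

theorem coupled_rank_S_full_general (n : ℕ)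
    (K₁₁ K₁₂ : Matrix (Fin n) (Fin n) ℂ)
    (hK : K₁₂ * K₁₂ᴴ = 1 + K₁₁ * K₁₁ᴴ)
    (V₁ V₂ S C : Matrix (Fin n) (Fin n) ℂ)
    (hV₁ : V₁ ∈ Matrix.unitaryGroup (Fin n) ℂ)
    (hS : S.PosSemidef) (hSd : S.IsDiag)
    (hC : C.PosSemidef)
    (hSC : S ^ 2 + C ^ 2 = 1)
    -- the singular value decomposition `K₁₁ = V₂ᴴ S⁻¹ C V₁`, written
    -- in the equivalent inverse-free form `S V₂ K₁₁ = C V₁`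
    (hsvd : S * V₂ * K₁₁ = C * V₁) :
    (K₁₂ * K₁₂ᴴ).PosDef ∧ IsUnit S ∧ S.rank = n ∧ (1 - S).PosSemidef := by
  have hV₁unit : IsUnit V₁ := Unitary.isUnit_coe (U := ⟨V₁, hV₁⟩)
  have hSunit : IsUnit S :=
    isUnit_of_mul_eq_mul_of_sq_add_sq_eq_one hS.isHermitian hC.isHermitian hSC hV₁unit
      ((Matrix.mul_assoc S V₂ K₁₁).symm.trans hsvd)
  refine ⟨?_, hSunit, ?_, hS.one_sub_of_isDiag_of_sq_add_sq_eq_one hSd hC.isHermitian hSC⟩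
  · rw [hK]
    exact PosDef.one.add_posSemidef (posSemidef_self_mul_conjTranspose K₁₁)
  · rw [rank_of_isUnit S hSunit, Fintype.card_fin]

theorem coupled_rank_S_full (n : ℕ)
    (K₁₁ K₁₂ : Matrix (Fin n) (Fin n) ℂ)
    (hK : K₁₂ * K₁₂ᴴ = 1 + K₁₁ * K₁₁ᴴ)
    (V₁ V₂ S C : Matrix (Fin n) (Fin n) ℂ)
    (hV₁ : V₁ ∈ Matrix.unitaryGroup (Fin n) ℂ)
    (hV₂ : V₂ ∈ Matrix.unitaryGroup (Fin n) ℂ)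
    (hS : S.PosSemidef) (hSd : S.IsDiag)
    (hC : C.PosSemidef) (hCd : C.IsDiag)
    (hSC : S ^ 2 + C ^ 2 = 1)
    -- the singular value decomposition `K₁₁ = V₂ᴴ S⁻¹ C V₁`, written
    -- in the equivalent inverse-free form `S V₂ K₁₁ = C V₁`
    (hsvd : S * V₂ * K₁₁ = C * V₁) :
    (K₁₂ * K₁₂ᴴ).PosDef ∧ IsUnit S ∧ S.rank = n ∧ (1 - S).PosSemidef :=
  coupled_rank_S_full_general n K₁₁ K₁₂ hK V₁ V₂ S C hV₁ hS hSd hC hSC hsvd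
end

section
/- Let W be a 2n×2n unitary matrix. Then there exist n×n unitary matrices U₁, U₂, V₁, V₂ and positive semi-definite diagonal n×n matrices C, S with C² + S² = I such that W = [[U₁, 0],[0, U₂]] · [[C, S],[-S, C]] · [[V₁, 0],[0, V₂]]. -/
/-!
Write `W = [A B; X Y]`. Since `AᴴA + XᴴX = 1`, diagonalising `AᴴA = V diag(c²) Vᴴ` gives
`0 ≤ c ≤ 1`; put `s = √(1 - c²)`. Then `(AV)ᴴ(AV) = C²` and `(XV)ᴴ(XV) = S²`, so `AV = U₁ C` and
`XV = -U₂ S` with `U₁, U₂` unitary: such factors exist even for singular `C, S`, because a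
norm-preserving linear map on a subspace extends to a unitary. In the frame
`diag(U₁, U₂)ᴴ W diag(V, 1)` the first block column is `[C; -S]`, and orthogonality of the block
columns forces the second one to be `[S; C] V₂` with `V₂` unitary.
-/

open Matrix
open scoped ComplexOrder

theorem LinearIsometry.exists_comp_eq_of_norm_eq {𝕜 E V : Type*} [RCLike 𝕜]
    [AddCommGroup E] [Module 𝕜 E] [NormedAddCommGroup V] [InnerProductSpace 𝕜 V]
    [FiniteDimensional 𝕜 V] {L T : E →ₗ[𝕜] V} (h : ∀ x, ‖L x‖ = ‖T x‖) :
    ∃ g : V →ₗᵢ[𝕜] V, ∀ x, g (T x) = L x := by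
  have hker : LinearMap.ker T ≤ LinearMap.ker L := fun x hx => by
    rw [LinearMap.mem_ker, ← norm_eq_zero, h x, LinearMap.mem_ker.mp hx, norm_zero]
  let f : LinearMap.range T →ₗ[𝕜] V :=
    (LinearMap.ker T).liftQ L hker ∘ₗ T.quotKerEquivRange.symm.toLinearMap
  have hf : ∀ x, f ⟨T x, LinearMap.mem_range_self T x⟩ = L x := fun x => by
    simp [f, LinearMap.quotKerEquivRange_symm_apply_image]
  let fᵢ : LinearMap.range T →ₗᵢ[𝕜] V :=
    { f with
      norm_map' := by
        rintro ⟨_, x, rfl⟩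
        simpa [h x] using congrArg norm (hf x) }
  exact ⟨fᵢ.extend, fun x => (fᵢ.extend_apply ⟨T x, _⟩).trans (hf x)⟩

theorem Matrix.exists_mem_unitaryGroup_mul_eq_of_conjTranspose_mul_self_eq
    {𝕜 n : Type*} [RCLike 𝕜] [Fintype n] [DecidableEq n] {M P : Matrix n n 𝕜}
    (h : Mᴴ * M = Pᴴ * P) : ∃ U ∈ unitaryGroup n 𝕜, M = U * P := by
  let Φ := toEuclideanCLM (n := n) (𝕜 := 𝕜)
  have hnorm : ∀ x, ‖Φ M x‖ = ‖Φ P x‖ := fun x => by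
    rw [← sq_eq_sq₀ (norm_nonneg _) (norm_nonneg _),
      ContinuousLinearMap.apply_norm_sq_eq_inner_adjoint_left,
      ContinuousLinearMap.apply_norm_sq_eq_inner_adjoint_left,
      ← ContinuousLinearMap.star_eq_adjoint, ← ContinuousLinearMap.star_eq_adjoint,
      ← ContinuousLinearMap.mul_def, ← ContinuousLinearMap.mul_def, ← map_star, ← map_star,
      ← map_mul, ← map_mul, star_eq_conjTranspose, star_eq_conjTranspose, h]
  obtain ⟨g, hg⟩ := LinearIsometry.exists_comp_eq_of_norm_eq
    (L := (Φ M).toLinearMap) (T := (Φ P).toLinearMap) hnorm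
  refine ⟨Φ.symm g.toContinuousLinearMap, ?_, EquivLike.injective Φ ?_⟩
  · rw [mem_unitaryGroup_iff']
    apply EquivLike.injective Φ
    rw [map_mul, map_star, StarAlgEquiv.apply_symm_apply, map_one,
      ContinuousLinearMap.star_eq_adjoint, ContinuousLinearMap.mul_def, g.adjoint_comp_self]
  · ext1 x
    rw [map_mul, StarAlgEquiv.apply_symm_apply]
    exact (hg x).symm

theorem Matrix.IsDiag.commute {α n : Type*} [CommSemiring α] [Fintype n] [DecidableEq n]
    {A B : Matrix n n α} (hA : A.IsDiag) (hB : B.IsDiag) : Commute A B := by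
  rw [← hA.diagonal_diag, ← hB.diagonal_diag]
  exact commute_diagonal _ _

theorem Matrix.exists_sq_add_sq_eq_one_of_posSemidef_one_sub {𝕜 n : Type*} [RCLike 𝕜] [Fintype n]
    [DecidableEq n] {G : Matrix n n 𝕜} (hG : G.PosSemidef) (hG' : (1 - G).PosSemidef) :
    ∃ V ∈ unitaryGroup n 𝕜, ∃ C S : Matrix n n 𝕜,
      C.PosSemidef ∧ C.IsDiag ∧ S.PosSemidef ∧ S.IsDiag ∧ C ^ 2 + S ^ 2 = 1 ∧
      star V * G * V = C ^ 2 := by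
  set V : Matrix n n 𝕜 := ↑hG.1.eigenvectorUnitary
  set ev := hG.1.eigenvalues
  have hdiag : star V * G * V = diagonal (RCLike.ofReal ∘ ev) := by
    rw [← Unitary.conjStarAlgAut_star_apply (S := 𝕜)]
    exact hG.1.conjStarAlgAut_star_eigenvectorUnitary
  have hle : ∀ i, ev i ≤ 1 := fun i => by
    have h := hG'.conjTranspose_mul_mul_same V
    rw [← star_eq_conjTranspose, mul_sub, sub_mul, hdiag, mul_one,
      Unitary.coe_star_mul_self, ← diagonal_one, diagonal_sub, posSemidef_diagonal_iff] at h
    exact_mod_cast (by simpa using h i : ((ev i : ℝ) : 𝕜) ≤ 1)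
  have hsq : ∀ d : n → ℝ, (∀ i, 0 ≤ d i) →
      (diagonal fun i => ((√(d i) : ℝ) : 𝕜)) ^ 2 = diagonal (RCLike.ofReal ∘ d) := fun d hd => by
    rw [sq, diagonal_mul_diagonal]
    congr 1
    funext i
    rw [← RCLike.ofReal_mul, Real.mul_self_sqrt (hd i), Function.comp_apply]
  have hpsd : ∀ d : n → ℝ, (diagonal fun i => ((√(d i) : ℝ) : 𝕜)).PosSemidef := fun d =>
    posSemidef_diagonal_iff.mpr fun i => RCLike.ofReal_nonneg.mpr (Real.sqrt_nonneg _)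
  refine ⟨V, hG.1.eigenvectorUnitary.2, _, _, hpsd ev, isDiag_diagonal _, hpsd (1 - ev),
    isDiag_diagonal _, ?_, ?_⟩
  · rw [hsq ev hG.eigenvalues_nonneg, hsq (1 - ev) fun i => sub_nonneg.mpr (hle i), diagonal_add,
      ← diagonal_one]
    congr 1
    funext i
    simp
  · rw [hdiag, hsq ev hG.eigenvalues_nonneg]

theorem Matrix.exists_cs_decomposition_of_conjTranspose_mul_self_add {𝕜 n : Type*} [RCLike 𝕜]
    [Fintype n] [DecidableEq n] {A X : Matrix n n 𝕜} (h : Aᴴ * A + Xᴴ * X = 1) :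
    ∃ U₁ ∈ unitaryGroup n 𝕜, ∃ U₂ ∈ unitaryGroup n 𝕜, ∃ V ∈ unitaryGroup n 𝕜,
      ∃ C S : Matrix n n 𝕜, C.PosSemidef ∧ C.IsDiag ∧ S.PosSemidef ∧ S.IsDiag ∧
        C ^ 2 + S ^ 2 = 1 ∧ A * V = U₁ * C ∧ X * V = U₂ * -S := by
  obtain ⟨V, hV, C, S, hC, hCd, hS, hSd, hCS, hAV⟩ :=
    exists_sq_add_sq_eq_one_of_posSemidef_one_sub (posSemidef_conjTranspose_mul_self A)
      (by rw [← h, add_sub_cancel_left]; exact posSemidef_conjTranspose_mul_self X)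
  have hXV : star V * (Xᴴ * X) * V = S ^ 2 := by
    rw [← add_sub_cancel_left (Aᴴ * A) (Xᴴ * X), h, mul_sub, sub_mul, mul_one,
      Unitary.star_mul_self_of_mem hV, hAV, ← hCS, add_sub_cancel_left]
  obtain ⟨U₁, hU₁, hA⟩ := exists_mem_unitaryGroup_mul_eq_of_conjTranspose_mul_self_eq
    (M := A * V) (P := C) (by
      rw [hC.1.eq, ← sq, ← hAV, conjTranspose_mul, star_eq_conjTranspose]
      simp only [mul_assoc])
  obtain ⟨U₂, hU₂, hX⟩ := exists_mem_unitaryGroup_mul_eq_of_conjTranspose_mul_self_eq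
    (M := -(X * V)) (P := S) (by
      rw [hS.1.eq, ← sq, ← hXV, conjTranspose_neg, neg_mul_neg, conjTranspose_mul,
        star_eq_conjTranspose]
      simp only [mul_assoc])
  exact ⟨U₁, hU₁, U₂, hU₂, V, hV, C, S, hC, hCd, hS, hSd, hCS, hA,
    by rw [mul_neg, ← hX, neg_neg]⟩

theorem Matrix.fromBlocks_mem_unitaryGroup {α m n : Type*} [CommRing α] [StarRing α]
    [Fintype m] [Fintype n] [DecidableEq m] [DecidableEq n] {U₁ : Matrix m m α}
    {U₂ : Matrix n n α} (h₁ : U₁ ∈ unitaryGroup m α) (h₂ : U₂ ∈ unitaryGroup n α) :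
    fromBlocks U₁ 0 0 U₂ ∈ unitaryGroup (m ⊕ n) α := by
  rw [mem_unitaryGroup_iff, star_eq_conjTranspose, fromBlocks_conjTranspose, fromBlocks_multiply]
  simp [← star_eq_conjTranspose, Unitary.mul_star_self_of_mem h₁, Unitary.mul_star_self_of_mem h₂]

theorem Matrix.exists_eq_mul_of_fromBlocks_mem_unitaryGroup {α n : Type*}
    [CommRing α] [StarRing α] [Fintype n] [DecidableEq n] {C S X Y : Matrix n n α}
    (hC : C.IsHermitian) (hS : S.IsHermitian) (hCS : Commute C S) (hCS1 : C ^ 2 + S ^ 2 = 1)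
    (hW : fromBlocks C X (-S) Y ∈ unitaryGroup (n ⊕ n) α) :
    ∃ V ∈ unitaryGroup n α, X = S * V ∧ Y = C * V := by
  have h₁ := Unitary.star_mul_self_of_mem hW
  have h₂ := Unitary.mul_star_self_of_mem hW
  simp only [star_eq_conjTranspose, fromBlocks_conjTranspose, fromBlocks_multiply, ← fromBlocks_one,
    fromBlocks_inj, conjTranspose_neg, hC.eq, hS.eq] at h₁ h₂
  obtain ⟨-, hCX, -, -⟩ := h₁
  obtain ⟨hXX, -, hYX, hYY⟩ := h₂
  have hXY := congrArg conjTranspose hYX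
  simp only [conjTranspose_add, conjTranspose_mul, conjTranspose_neg, conjTranspose_conjTranspose,
    conjTranspose_zero, hC.eq, hS.eq] at hXY
  -- The only candidate: `X = S V` and `Y = C V` force `S X + C Y = (S² + C²) V = V`.
  refine ⟨S * X + C * Y, ?_, ?_, ?_⟩
  · rw [mem_unitaryGroup_iff, star_eq_conjTranspose]
    simp only [conjTranspose_add, conjTranspose_mul, hC.eq, hS.eq]
    linear_combination (norm := noncomm_ring) S * hXX * S + S * hXY * C + C * hYX * S + C * hYY * C
      + hCS1 + (C * S - S * C) * hCS.eq
  · linear_combination (norm := noncomm_ring) -hCS1 * X + C * hCX + hCS.eq * Y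
  · linear_combination (norm := noncomm_ring) -hCS1 * Y - S * hCX - hCS.eq * X

theorem Matrix.exists_cs_decomposition_of_mul_eq {α n : Type*} [CommRing α] [StarRing α]
    [Fintype n] [DecidableEq n] {A B X Y U₁ U₂ V C S : Matrix n n α}
    (hW : fromBlocks A B X Y ∈ unitaryGroup (n ⊕ n) α) (hU₁ : U₁ ∈ unitaryGroup n α)
    (hU₂ : U₂ ∈ unitaryGroup n α) (hV : V ∈ unitaryGroup n α) (hC : C.IsHermitian)
    (hS : S.IsHermitian) (hCS : Commute C S) (hCS1 : C ^ 2 + S ^ 2 = 1)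
    (hA : A * V = U₁ * C) (hX : X * V = U₂ * -S) :
    ∃ V₂ ∈ unitaryGroup n α, fromBlocks A B X Y =
      fromBlocks U₁ 0 0 U₂ * fromBlocks C S (-S) C * fromBlocks (star V) 0 0 V₂ := by
  set P := fromBlocks U₁ 0 0 U₂
  set Q := fromBlocks V 0 0 (1 : Matrix n n α)
  have hP : P ∈ unitaryGroup _ α := fromBlocks_mem_unitaryGroup hU₁ hU₂
  have hQ : Q ∈ unitaryGroup _ α := fromBlocks_mem_unitaryGroup hV (one_mem _)
  have hWQ : fromBlocks A B X Y * Q = fromBlocks (U₁ * C) B (U₂ * -S) Y := by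
    rw [← hA, ← hX]
    simp [Q, fromBlocks_multiply]
  have hW' : star P * fromBlocks A B X Y * Q = fromBlocks C (star U₁ * B) (-S) (star U₂ * Y) := by
    rw [mul_assoc, hWQ]
    simp only [P, star_eq_conjTranspose, fromBlocks_conjTranspose, fromBlocks_multiply,
      conjTranspose_zero, zero_mul, add_zero, zero_add, mul_neg, neg_zero, fromBlocks_inj,
      neg_inj, and_true, true_and]
    simp only [← star_eq_conjTranspose, ← mul_assoc, Unitary.star_mul_self_of_mem hU₁,
      Unitary.star_mul_self_of_mem hU₂, one_mul, and_self]
  obtain ⟨V₂, hV₂, hB, hY⟩ := exists_eq_mul_of_fromBlocks_mem_unitaryGroup hC hS hCS hCS1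
    (hW' ▸ mul_mem (mul_mem (Unitary.star_mem hP) hW) hQ)
  refine ⟨V₂, hV₂, ?_⟩
  calc fromBlocks A B X Y = P * (star P * fromBlocks A B X Y * Q) * star Q := by
        rw [← mul_assoc, ← mul_assoc, Unitary.mul_star_self_of_mem hP, one_mul, mul_assoc,
          Unitary.mul_star_self_of_mem hQ, mul_one]
    _ = _ := by
        rw [hW', hB, hY, mul_assoc, mul_assoc]
        congr 1
        simp [Q, star_eq_conjTranspose, fromBlocks_conjTranspose, fromBlocks_multiply]

theorem cs_decomposition (n : ℕ)
    (W : Matrix (Fin n ⊕ Fin n) (Fin n ⊕ Fin n) ℂ)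
    (hW : W ∈ Matrix.unitaryGroup (Fin n ⊕ Fin n) ℂ) :
    ∃ U₁ U₂ V₁ V₂ C S : Matrix (Fin n) (Fin n) ℂ,
      U₁ ∈ Matrix.unitaryGroup (Fin n) ℂ ∧ U₂ ∈ Matrix.unitaryGroup (Fin n) ℂ ∧
      V₁ ∈ Matrix.unitaryGroup (Fin n) ℂ ∧ V₂ ∈ Matrix.unitaryGroup (Fin n) ℂ ∧
      C.PosSemidef ∧ C.IsDiag ∧ S.PosSemidef ∧ S.IsDiag ∧
      C ^ 2 + S ^ 2 = 1 ∧
      W = Matrix.fromBlocks U₁ 0 0 U₂ * Matrix.fromBlocks C S (-S) C *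
            Matrix.fromBlocks V₁ 0 0 V₂ := by
  obtain ⟨A, B, X, Y, rfl⟩ : ∃ A B X Y, W = fromBlocks A B X Y :=
    ⟨_, _, _, _, (fromBlocks_toBlocks W).symm⟩
  have hcol : Aᴴ * A + Xᴴ * X = 1 := by
    have := Unitary.star_mul_self_of_mem hW
    simp only [star_eq_conjTranspose, fromBlocks_conjTranspose, fromBlocks_multiply,
      ← fromBlocks_one, fromBlocks_inj] at this
    exact this.1
  obtain ⟨U₁, hU₁, U₂, hU₂, V, hV, C, S, hC, hCd, hS, hSd, hCS, hA, hX⟩ :=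
    exists_cs_decomposition_of_conjTranspose_mul_self_add hcol
  obtain ⟨V₂, hV₂, hW⟩ := exists_cs_decomposition_of_mul_eq hW hU₁ hU₂ hV hC.1 hS.1
    (hCd.commute hSd) hCS hA hX
  exact ⟨U₁, U₂, star V, V₂, C, S, hU₁, hU₂, Unitary.star_mem hV, hV₂, hC, hCd, hS, hSd, hCS, hW⟩
end
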